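/- Fix m ≥ 1, n ≥ 1, positive reals x₁,…,x_n, and positive reals y_i for i ∈ I ⊆ {1,…,n}. The function p̃(z) = (z/n) Σ_{i∈I} y_i/(1+y_i z) + (z/n) Σ_{j=1}^n g_{m-1,j}'(z)/g_{m-1,j}(z) is strictly increasing on (0, ∞), where g_{m-1,j}(z) = Σ_{k=0}^{m-1} z^k x_j^{m-1-k}. -/

import Mathlib

/-!
Each `y z / (1 + y z)` is strictly increasing. For `g(z) = ∑ c_k z^k` with all `c_k > 0`,
`z g'(z) / g(z)` is the mean of `k` under the weights `c_k z^k`; passing from `a` to `b > a`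
multiplies these weights by `(b/a)^k`, which increases with `k`, so by the weighted Chebyshev
sum inequality the mean increases, strictly as soon as `g` has two terms (for `m ≤ 1` it is
identically `0`).
-/

open Finset Set

theorem two_mul_sum_mul_sum_sub_sum_mul_sum {ι : Type*} (s : Finset ι) (w f g : ι → ℝ) :
    2 * ((∑ i ∈ s, w i) * (∑ i ∈ s, w i * f i * g i) -
        (∑ i ∈ s, w i * f i) * ∑ i ∈ s, w i * g i) =
      ∑ i ∈ s, ∑ j ∈ s, w i * w j * ((f j - f i) * (g j - g i)) := by
  have hswap : ∑ i ∈ s, ∑ j ∈ s, w i * w j * (f j * g i) =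
      ∑ i ∈ s, ∑ j ∈ s, w i * w j * (f i * g j) := by
    rw [sum_comm]; simp only [mul_comm (w _) (w _)]
  have hdiag : ∑ i ∈ s, ∑ j ∈ s, w i * w j * (f i * g i) =
      ∑ i ∈ s, ∑ j ∈ s, w i * w j * (f j * g j) := by
    rw [sum_comm]; simp only [mul_comm (w _) (w _)]
  have hw : ∀ i j, w i * (w j * f j * g j) = w i * w j * (f j * g j) := fun _ _ => by ring
  have hwfg : ∀ i j, w i * f i * (w j * g j) = w i * w j * (f i * g j) := fun _ _ => by ring
  simp only [mul_sub, sub_mul, sum_sub_distrib, hswap, hdiag, sum_mul_sum, hw, hwfg]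
  ring

theorem MonovaryOn.sum_mul_sum_lt_sum_mul_sum {ι : Type*} {s : Finset ι} {w f g : ι → ℝ}
    (hw : ∀ i ∈ s, 0 ≤ w i) (hfg : MonovaryOn f g s) {i j : ι} (hi : i ∈ s) (hj : j ∈ s)
    (hwi : 0 < w i) (hwj : 0 < w j) (hf : f i < f j) (hg : g i < g j) :
    (∑ i ∈ s, w i * f i) * (∑ i ∈ s, w i * g i) < (∑ i ∈ s, w i) * ∑ i ∈ s, w i * f i * g i := by
  have hterm : ∀ i ∈ s, ∀ j ∈ s, 0 ≤ w i * w j * ((f j - f i) * (g j - g i)) :=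
    fun i hi j hj => mul_nonneg (mul_nonneg (hw i hi) (hw j hj)) (hfg.sub_mul_sub_nonneg hi hj)
  have hgap : 0 < ∑ i ∈ s, ∑ j ∈ s, w i * w j * ((f j - f i) * (g j - g i)) := by
    refine sum_pos' (fun i hi => sum_nonneg (hterm i hi)) ⟨i, hi, ?_⟩
    refine sum_pos' (hterm i hi) ⟨j, hj, ?_⟩
    exact mul_pos (mul_pos hwi hwj) (mul_pos (sub_pos.2 hf) (sub_pos.2 hg))
  linarith [two_mul_sum_mul_sum_sub_sum_mul_sum s w f g]

section SumMonotoneOn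

variable {ι : Type*} {s : Finset ι} {F : ι → ℝ → ℝ} {t : Set ℝ}

theorem Finset.monotoneOn_sum (hF : ∀ i ∈ s, MonotoneOn (F i) t) :
    MonotoneOn (fun z => ∑ i ∈ s, F i z) t :=
  fun _ ha _ hb hab => sum_le_sum fun i hi => hF i hi ha hb hab

theorem Finset.strictMonoOn_sum (hF : ∀ i ∈ s, MonotoneOn (F i) t)
    (hstrict : ∃ i ∈ s, StrictMonoOn (F i) t) : StrictMonoOn (fun z => ∑ i ∈ s, F i z) t := by
  obtain ⟨i, hi, hFi⟩ := hstrict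
  exact fun _ ha _ hb hab => sum_lt_sum (fun j hj => hF j hj ha hb hab.le) ⟨i, hi, hFi ha hb hab⟩

end SumMonotoneOn

theorem strictMonoOn_mul_div_one_add_mul {y : ℝ} (hy : 0 < y) :
    StrictMonoOn (fun z => y * z / (1 + y * z)) (Ioi 0) := by
  intro a (ha : 0 < a) b (hb : 0 < b) hab
  rw [div_lt_div_iff₀ (by positivity) (by positivity)]
  nlinarith [mul_lt_mul_of_pos_left hab hy]

section PowerSum

variable {m : ℕ} {c : ℕ → ℝ}

theorem mul_deriv_sum_pow_mul (m : ℕ) (c : ℕ → ℝ) (z : ℝ) :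
    z * deriv (fun s : ℝ => ∑ k ∈ range m, s ^ k * c k) z =
      ∑ k ∈ range m, (k : ℝ) * z ^ k * c k := by
  have hderiv : HasDerivAt (fun s : ℝ => ∑ k ∈ range m, s ^ k * c k)
      (∑ k ∈ range m, (k : ℝ) * z ^ (k - 1) * c k) z :=
    HasDerivAt.fun_sum fun k _ => by simpa using (hasDerivAt_pow k z).mul_const (c k)
  rw [hderiv.deriv, mul_sum]
  refine sum_congr rfl fun k _ => ?_
  rcases eq_or_ne k 0 with rfl | hk
  · simp
  · rw [← mul_pow_sub_one hk z]; ring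

theorem sum_pow_mul_pos (hm : 0 < m) (hc : ∀ k ∈ range m, 0 < c k) {z : ℝ} (hz : 0 < z) :
    0 < ∑ k ∈ range m, z ^ k * c k :=
  sum_pos (fun k hk => mul_pos (pow_pos hz k) (hc k hk)) (nonempty_range_iff.2 hm.ne')

theorem strictMonoOn_mul_deriv_div_sum_pow_mul (hm : 2 ≤ m) (hc : ∀ k ∈ range m, 0 < c k) :
    StrictMonoOn (fun z => z * deriv (fun s : ℝ => ∑ k ∈ range m, s ^ k * c k) z /
      ∑ k ∈ range m, z ^ k * c k) (Ioi 0) := by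
  simp only [mul_deriv_sum_pow_mul]
  intro a (ha : 0 < a) b (hb : 0 < b) hab
  have hm0 : 0 < m := by omega
  rw [div_lt_div_iff₀ (sum_pow_mul_pos hm0 hc ha) (sum_pow_mul_pos hm0 hc hb),
    mul_comm _ (∑ k ∈ range m, a ^ k * c k)]
  have h0 : 0 ∈ range m := mem_range.2 (by omega)
  have h1 : 1 ∈ range m := mem_range.2 hm
  have key := MonovaryOn.sum_mul_sum_lt_sum_mul_sum (s := range m) (w := fun k => a ^ k * c k)
    (f := fun k => (k : ℝ)) (g := fun k => (b / a) ^ k)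
    (fun k hk => (mul_pos (pow_pos ha k) (hc k hk)).le)
    ((Nat.mono_cast.monovary (pow_right_mono₀ ((one_le_div ha).2 hab.le))).monovaryOn _)
    h0 h1 (by simpa using hc 0 h0) (by simpa using mul_pos ha (hc 1 h1)) (by simp)
    (by simpa using (one_lt_div ha).2 hab)
  have hpow : ∀ k : ℕ, b ^ k = a ^ k * (b / a) ^ k := fun k => by
    rw [← mul_pow, mul_div_cancel₀ b ha.ne']
  have hN_a : ∀ k : ℕ, (k : ℝ) * a ^ k * c k = a ^ k * c k * k := fun k => by ring
  have hD_b : ∀ k : ℕ, b ^ k * c k = a ^ k * c k * (b / a) ^ k := fun k => by rw [hpow]; ring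
  have hN_b : ∀ k : ℕ, (k : ℝ) * b ^ k * c k = a ^ k * c k * k * (b / a) ^ k := fun k => by
    rw [hpow]; ring
  simpa only [hN_a, hD_b, hN_b] using key

theorem monotoneOn_mul_deriv_div_sum_pow_mul (hc : ∀ k ∈ range m, 0 < c k) :
    MonotoneOn (fun z => z * deriv (fun s : ℝ => ∑ k ∈ range m, s ^ k * c k) z /
      ∑ k ∈ range m, z ^ k * c k) (Ioi 0) := by
  rcases lt_or_ge m 2 with hm | hm
  · simp only [mul_deriv_sum_pow_mul]
    interval_cases m <;> simpa using monotoneOn_const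
  · exact (strictMonoOn_mul_deriv_div_sum_pow_mul hm hc).monotoneOn

end PowerSum

theorem stmt_4_general (m n : ℕ) (hn : 1 ≤ n) (x y : Fin n → ℝ)
    (hx : ∀ j, 0 < x j) (I : Finset (Fin n)) (hy : ∀ i ∈ I, 0 < y i)
    (hcond : I.Nonempty ∨ 2 ≤ m) :
    StrictMonoOn
      (fun z : ℝ =>
        (z / n) * (∑ i ∈ I, y i / (1 + y i * z)) +
          (z / n) * (∑ j : Fin n,
            deriv (fun s : ℝ => ∑ k ∈ Finset.range m, s ^ k * x j ^ (m - 1 - k)) z /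
              (∑ k ∈ Finset.range m, z ^ k * x j ^ (m - 1 - k))))
      (Set.Ioi 0) := by
  have hI : ∀ i ∈ I, StrictMonoOn (fun z => y i * z / (1 + y i * z)) (Ioi 0) :=
    fun i hi => strictMonoOn_mul_div_one_add_mul (hy i hi)
  have hcoeff : ∀ j, ∀ k ∈ range m, 0 < x j ^ (m - 1 - k) := fun j k _ => pow_pos (hx j) _
  have hsum : StrictMonoOn (fun z => ∑ i ∈ I, y i * z / (1 + y i * z) + ∑ j : Fin n,
      z * deriv (fun s : ℝ => ∑ k ∈ range m, s ^ k * x j ^ (m - 1 - k)) z /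
        ∑ k ∈ range m, z ^ k * x j ^ (m - 1 - k)) (Ioi 0) := by
    have hJ : ∀ j ∈ (univ : Finset (Fin n)), MonotoneOn _ _ :=
      fun j _ => monotoneOn_mul_deriv_div_sum_pow_mul (hcoeff j)
    rcases hcond with ⟨i, hi⟩ | hm
    · exact (strictMonoOn_sum (fun i hi => (hI i hi).monotoneOn) ⟨i, hi, hI i hi⟩).add_monotone
        (monotoneOn_sum hJ)
    · exact (monotoneOn_sum fun i hi => (hI i hi).monotoneOn).add_strictMono
        (strictMonoOn_sum hJ ⟨⟨0, hn⟩, mem_univ _,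
          strictMonoOn_mul_deriv_div_sum_pow_mul hm (hcoeff ⟨0, hn⟩)⟩)
  have hn0 : (0 : ℝ) < n := by exact_mod_cast hn
  refine StrictMonoOn.congr (fun a ha b hb hab => div_lt_div_of_pos_right (hsum ha hb hab) hn0)
    fun z _ => ?_
  simp only [add_div, sum_div, mul_sum]
  congr 1 <;> exact sum_congr rfl fun _ _ => by ring

/-- The function
`p̃(z) = (z/n) Σ_{i∈I} y_i/(1+y_i z) + (z/n) Σ_j g_{m-1,j}'(z)/g_{m-1,j}(z)`
is strictly increasing on `(0, ∞)` (when `I` is nonempty or `m ≥ 2`). -/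
theorem stmt_4 (m n : ℕ) (hm : 1 ≤ m) (hn : 1 ≤ n) (x y : Fin n → ℝ)
    (hx : ∀ j, 0 < x j) (I : Finset (Fin n)) (hy : ∀ i ∈ I, 0 < y i)
    (hcond : I.Nonempty ∨ 2 ≤ m) :
    StrictMonoOn
      (fun z : ℝ =>
        (z / n) * (∑ i ∈ I, y i / (1 + y i * z)) +
          (z / n) * (∑ j : Fin n,
            deriv (fun s : ℝ => ∑ k ∈ Finset.range m, s ^ k * x j ^ (m - 1 - k)) z /
              (∑ k ∈ Finset.range m, z ^ k * x j ^ (m - 1 - k))))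
      (Set.Ioi 0) :=
  stmt_4_general m n hn x y hx I hy hcond
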